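/- arXiv:1612.04450 — 2 statements merged into one kernel-verified Lean document; each statement's English description precedes it below -/
import Mathlib

section
/- For any poset E, the simplicial set κ*(E, ξE) is naturally isomorphic to the nerve N₁(E) of E. -/
open CategoryTheory

universe u

/-- A simplicial complex: a poset `E` together with a set `Φ` of nonempty finite linearly
ordered subsets of `E`, containing all singletons and closed under nonempty subsets. -/
structure SimpComplex : Type 1 where
  E : Type
  [ord : PartialOrder E]
  Φ : Set (Set E)
  finite : ∀ S ∈ Φ, S.Finite
  nonempty : ∀ S ∈ Φ, S.Nonempty
  chain : ∀ S ∈ Φ, ∀ x ∈ S, ∀ y ∈ S, x ≤ y ∨ y ≤ x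
  singleton_mem : ∀ x : E, {x} ∈ Φ
  down : ∀ S ∈ Φ, ∀ S' ⊆ S, S'.Nonempty → S' ∈ Φ

attribute [instance] SimpComplex.ord

/-- Morphisms of simplicial complexes: monotone maps sending simplices to simplices. -/
@[ext]
structure SCHom (K L : SimpComplex) where
  toFun : K.E → L.E
  mono : Monotone toFun
  mapΦ : ∀ S ∈ K.Φ, toFun '' S ∈ L.Φ

instance : Category SimpComplex where
  Hom := SCHom
  id K := ⟨id, monotone_id, by simpa using fun S hS => hS⟩
  comp f g := ⟨g.toFun ∘ f.toFun, g.mono.comp f.mono, by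
    intro S hS
    rw [Set.image_comp]
    exact g.mapΦ _ (f.mapΦ _ hS)⟩

theorem SCHom.hext {K L : SimpComplex} (f g : K ⟶ L) (h : f.toFun = g.toFun) : f = g :=
  SCHom.ext h

/-- The set of all nonempty finite chains of a poset. -/
def xiSet (E : Type) [PartialOrder E] : Set (Set E) :=
  {S | S.Finite ∧ S.Nonempty ∧ ∀ x ∈ S, ∀ y ∈ S, x ≤ y ∨ y ≤ x}

/-- The simplicial complex `(E, ξE)` associated to a poset `E`. -/
def SimpComplex.ofPoset (E : Type) [PartialOrder E] : SimpComplex where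
  E := E
  Φ := xiSet E
  finite := fun S hS => hS.1
  nonempty := fun S hS => hS.2.1
  chain := fun S hS => hS.2.2
  singleton_mem := fun x => ⟨Set.finite_singleton x, Set.singleton_nonempty x, by simp⟩
  down := by
    intro S hS S' hsub hne
    exact ⟨hS.1.subset hsub, hne, fun x hx y hy => hS.2.2 x (hsub hx) y (hsub hy)⟩

/-- The morphism of simplicial complexes induced by a monotone map of posets. -/
def SimpComplex.ofPosetMap {E F : Type} [PartialOrder E] [PartialOrder F] (f : E →o F) :
    SimpComplex.ofPoset E ⟶ SimpComplex.ofPoset F where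
  toFun := f
  mono := f.mono
  mapΦ := by
    intro S hS
    refine ⟨hS.1.image f, hS.2.1.image f, ?_⟩
    rintro - ⟨x, hx, rfl⟩ - ⟨y, hy, rfl⟩
    rcases hS.2.2 x hx y hy with h | h
    · exact Or.inl (f.mono h)
    · exact Or.inr (f.mono h)

/-- The cosimplicial object `Δ_n ↦ (Δ_n, ξΔ_n)` in simplicial complexes. -/
def kappa : SimplexCategory ⥤ SimpComplex where
  obj n := SimpComplex.ofPoset (Fin (n.len + 1))
  map f := SimpComplex.ofPosetMap f.toOrderHom
  map_id := by intro n; apply SCHom.hext; rfl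
  map_comp := by intro a b c f g; apply SCHom.hext; rfl

/-- The functor `κ* : SC ⥤ sSet`, `κ*(K)_n = Hom_SC(κ(Δ_n), K)`. -/
noncomputable def kappaStar : SimpComplex ⥤ SSet :=
    yoneda ⋙ (Functor.whiskeringLeft _ _ _).obj kappa.op

/-!
An `n`-simplex of `κ*(E, ξE)` is a morphism `(Δ_n, ξΔ_n) ⟶ (E, ξE)`, i.e. a monotone map
`Fin (n + 1) → E` (the simplex condition is automatic, since monotone maps send chains to chains),
and an `n`-simplex of the nerve is a functor `Fin (n + 1) ⥤ E`, which for posets is again just a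
monotone map. Faces, degeneracies and the action of monotone maps `E →o F` are precomposition
and postcomposition on both sides, so naturality holds definitionally.
-/

namespace SimpComplex

def ofPosetHomEquiv (E F : Type) [PartialOrder E] [PartialOrder F] :
    (ofPoset E ⟶ ofPoset F) ≃ (E →o F) where
  toFun f := ⟨f.toFun, f.mono⟩
  invFun := ofPosetMap
  left_inv _ := rfl
  right_inv _ := rfl

end SimpComplex

open SimpComplex

noncomputable def kappaStarOfPosetIsoNerve (E : Type) [PartialOrder E] :
    kappaStar.obj (ofPoset E) ≅ nerve E :=
  NatIso.ofComponents
    (fun _ => ((ofPosetHomEquiv _ E).trans OrderHom.equivFunctor).toIso)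
    (fun _ => rfl)

theorem kappaStarOfPosetIsoNerve_hom_naturality {E F : Type} [PartialOrder E] [PartialOrder F]
    (f : E →o F) :
    (kappaStarOfPosetIsoNerve E).hom ≫ nerveFunctor.map f.monotone.functor.toCatHom =
      kappaStar.map (ofPosetMap f) ≫ (kappaStarOfPosetIsoNerve F).hom :=
  rfl

/-- For every poset `E`, the simplicial set `κ*(E, ξE)` is isomorphic to the nerve of
`E`, naturally in `E`. -/
theorem kappaStar_ofPoset_iso_nerve :
    ∃ φ : ∀ (E : Type) [PartialOrder E],
      (kappaStar.obj (SimpComplex.ofPoset E) ≅ nerveFunctor.obj (Cat.of E)),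
    ∀ (E F : Type) [PartialOrder E] [PartialOrder F] (f : E →o F),
      (φ E).hom ≫ nerveFunctor.map (show Cat.of E ⟶ Cat.of F from f.monotone.functor.toCatHom) =
        kappaStar.map (SimpComplex.ofPosetMap f) ≫ (φ F).hom :=
  ⟨fun E _ => kappaStarOfPosetIsoNerve E,
    fun _ _ _ _ f => kappaStarOfPosetIsoNerve_hom_naturality f⟩
end

section
/- Let K be an augmented directed complex with basis. If the basis is strongly loop-free (the preorder ≤_N generated by: x ≤_N y whenever x ∈ supp(d(y)₋) or y ∈ supp(d(x)₊) is antisymmetric), then the basis is loop-free (for every i ≥ 0, the preorder ≤_i generated by: x ≤_i y whenever |x| > i, |y| > i and supp(⟨x⟩¹_i) ∩ supp(⟨y⟩⁰_i) ≠ ∅ is antisymmetric). -/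
/-- An augmented directed complex equipped with a basis, presented concretely: a graded
set `B` of basis elements, with chain groups the free abelian groups `B n →₀ ℤ`, the
positivity submonoids being the chains with nonnegative coordinates. -/
structure ADCB : Type 1 where
  B : ℕ → Type
  d : ∀ n, (B (n + 1) →₀ ℤ) →+ (B n →₀ ℤ)
  e : (B 0 →₀ ℤ) →+ ℤ
  dd : ∀ n, ((d n).comp (d (n + 1))) = 0
  ed : e.comp (d 0) = 0

namespace ADCB

variable (K : ADCB)

/-- The group of `n`-chains. -/
abbrev chain (n : ℕ) : Type := K.B n →₀ ℤ

/-- The positive part `x₊` of a chain. -/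
noncomputable def pPart {α : Type} (x : α →₀ ℤ) : α →₀ ℤ := x ⊔ 0

/-- The negative part `x₋` of a chain, so that `x = x₊ - x₋`. -/
noncomputable def nPart {α : Type} (x : α →₀ ℤ) : α →₀ ℤ := (-x) ⊔ 0

end ADCB

namespace ADCB

variable (K : ADCB)

/-- Auxiliary recursion computing the entries of the atom matrix: starting from a chain in
degree `k + j`, apply `j` times the differential followed by taking the positive
(`ε = true`) or negative (`ε = false`) part. -/
noncomputable def atomAux (ε : Bool) : ∀ (k j : ℕ), K.chain (k + j) → K.chain k
  | _, 0, x => x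
  | k, j + 1, x =>
      (if ε then pPart else nPart)
        (K.d k (atomAux ε (k + 1) j
          (cast (congrArg K.chain (by omega)) x)))

/-- The entry `⟨b⟩^ε_i` of the atom matrix of a basis element `b` of degree `m`, for
`i ≤ m`. -/
noncomputable def atom (ε : Bool) {m : ℕ} (b : K.B m) (i : ℕ) (h : i ≤ m) : K.chain i :=
  K.atomAux ε i (m - i) (cast (congrArg K.chain (by omega)) (Finsupp.single b 1))

/-- The generating relation of the preorder `≤_N`: `a ≤ b` if `a` occurs in the negative
part of `d b`, or `b` occurs in the positive part of `d a`. -/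
def relN (a b : Σ n, K.B n) : Prop :=
  (∃ h : b.1 = a.1 + 1, a.2 ∈ (nPart (K.d a.1 (Finsupp.single (h ▸ b.2) 1))).support) ∨
  (∃ h : a.1 = b.1 + 1, b.2 ∈ (pPart (K.d b.1 (Finsupp.single (h ▸ a.2) 1))).support)

/-- The basis is strongly loop-free if the preorder generated by `relN` is antisymmetric,
i.e. a partial order. -/
def StronglyLoopFree : Prop :=
  ∀ a b : Σ n, K.B n, Relation.ReflTransGen K.relN a b →
    Relation.ReflTransGen K.relN b a → a = b

/-- The generating relation of the preorder `≤_i`: `a ≤_i b` for basis elements of degree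
`> i` whose atoms `⟨a⟩¹_i` and `⟨b⟩⁰_i` have intersecting supports. -/
def relI (i : ℕ) (a b : Σ n, K.B n) : Prop :=
  ∃ (ha : i < a.1) (hb : i < b.1),
    ∃ c, c ∈ (K.atom true a.2 i ha.le).support ∧ c ∈ (K.atom false b.2 i hb.le).support

/-- The basis is loop-free if for every `i` the preorder generated by `relI i` is
antisymmetric, i.e. a partial order. -/
def LoopFree : Prop :=
  ∀ (i : ℕ) (a b : Σ n, K.B n), Relation.ReflTransGen (K.relI i) a b →
    Relation.ReflTransGen (K.relI i) b a → a = b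

end ADCB

/-!
Each generating step of `≤_i` lies in `≤_N`. For a positive chain `w`, every element of the
support of `(d w)₊` lies in the support of `(d x)₊` for some `x` in the support of `w`; so
iterating, an element of the support of `⟨a⟩¹_i` is reached from `a` by `≤_N`-steps, and
dually an element of the support of `⟨b⟩⁰_i` reaches `b`. Hence `≤_i ⊆ ≤_N`, and
antisymmetry passes to the smaller preorder.
-/

namespace ADCB

theorem mem_support_pPart {α : Type} {x : α →₀ ℤ} {a : α} :
    a ∈ (pPart x).support ↔ 0 < x a := by
  simp only [pPart, Finsupp.mem_support_iff, Finsupp.sup_apply, Finsupp.coe_zero, Pi.zero_apply]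
  omega

theorem pPart_nonneg {α : Type} (x : α →₀ ℤ) : 0 ≤ pPart x := le_sup_right

theorem nPart_nonneg {α : Type} (x : α →₀ ℤ) : 0 ≤ nPart x := le_sup_right

theorem _root_.AddMonoidHom.finsupp_apply_eq_sum {α β : Type} (f : (α →₀ ℤ) →+ (β →₀ ℤ))
    (w : α →₀ ℤ) (c : β) : f w c = ∑ x ∈ w.support, w x * f (Finsupp.single x 1) c := by
  conv_lhs => rw [← Finsupp.sum_single w, map_finsuppSum, Finsupp.sum_apply]
  refine Finset.sum_congr rfl fun x _ => ?_
  rw [← smul_eq_mul, ← Finsupp.smul_apply, ← map_zsmul, Finsupp.smul_single_one]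

-- For `w ≥ 0`, `(f w)₊ ≤ ∑ₓ wₓ (f x)₊`.
theorem exists_mem_support_pPart_single {α β : Type} (f : (α →₀ ℤ) →+ (β →₀ ℤ))
    {w : α →₀ ℤ} (hw : 0 ≤ w) {c : β} (hc : c ∈ (pPart (f w)).support) :
    ∃ x ∈ w.support, c ∈ (pPart (f (Finsupp.single x 1))).support := by
  rw [mem_support_pPart, f.finsupp_apply_eq_sum] at hc
  obtain ⟨x, hx, hpos⟩ := Finset.exists_lt_of_sum_lt (Finset.sum_const_zero.trans_lt hc)
  exact ⟨x, hx, mem_support_pPart.2 (pos_of_mul_pos_right hpos (hw x))⟩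

theorem exists_mem_support_nPart_single {α β : Type} (f : (α →₀ ℤ) →+ (β →₀ ℤ))
    {w : α →₀ ℤ} (hw : 0 ≤ w) {c : β} (hc : c ∈ (nPart (f w)).support) :
    ∃ x ∈ w.support, c ∈ (nPart (f (Finsupp.single x 1))).support :=
  exists_mem_support_pPart_single (-f) hw hc

variable (K : ADCB)

def relNDir (ε : Bool) : (Σ n, K.B n) → (Σ n, K.B n) → Prop :=
  if ε then K.relN else Function.swap K.relN

theorem exists_relNDir_of_mem_support_d {ε : Bool} {k : ℕ} {w : K.chain (k + 1)} (hw : 0 ≤ w)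
    {c : K.B k} (hc : c ∈ ((if ε then pPart else nPart) (K.d k w)).support) :
    ∃ x ∈ w.support, K.relNDir ε ⟨k + 1, x⟩ ⟨k, c⟩ := by
  cases ε
  · obtain ⟨x, hx, hc⟩ := exists_mem_support_nPart_single (K.d k) hw hc
    exact ⟨x, hx, Or.inl ⟨rfl, hc⟩⟩
  · obtain ⟨x, hx, hc⟩ := exists_mem_support_pPart_single (K.d k) hw hc
    exact ⟨x, hx, Or.inr ⟨rfl, hc⟩⟩

theorem atomAux_cast_nonneg (ε : Bool) :
    ∀ (j k n : ℕ) (h : n = k + j) {z : K.chain n}, 0 ≤ z →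
      0 ≤ K.atomAux ε k j (cast (congrArg K.chain h) z)
  | 0, _, _, rfl, _, hz => hz
  | _ + 1, _, _, _, _, _ => by cases ε <;> [exact nPart_nonneg _; exact pPart_nonneg _]

-- Stated for a cast of an arbitrary `z` so that the casts of `atomAux` compose by `cast_cast`
-- instead of having to be transported along the induction.
theorem exists_relNDir_of_mem_support_atomAux (ε : Bool) :
    ∀ (j k n : ℕ) (h : n = k + j) {z : K.chain n}, 0 ≤ z →
      ∀ c ∈ (K.atomAux ε k j (cast (congrArg K.chain h) z)).support,
        ∃ x ∈ z.support, Relation.ReflTransGen (K.relNDir ε) ⟨n, x⟩ ⟨k, c⟩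
  | 0, _, _, rfl, _, _, c, hc => ⟨c, hc, .refl⟩
  | j + 1, k, n, h, z, hz, c, hc => by
    have e : k + (j + 1) = k + 1 + j := by omega
    rw [atomAux, cast_cast] at hc
    obtain ⟨y, hy, hyc⟩ :=
      K.exists_relNDir_of_mem_support_d (K.atomAux_cast_nonneg ε j (k + 1) n (h.trans e) hz) hc
    obtain ⟨x, hx, hxy⟩ := exists_relNDir_of_mem_support_atomAux ε j (k + 1) n (h.trans e) hz y hy
    exact ⟨x, hx, hxy.tail hyc⟩

theorem relNDir_of_mem_support_atom (ε : Bool) {m i : ℕ} (b : K.B m) (hi : i ≤ m) {c : K.B i}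
    (hc : c ∈ (K.atom ε b i hi).support) :
    Relation.ReflTransGen (K.relNDir ε) ⟨m, b⟩ ⟨i, c⟩ := by
  obtain ⟨x, hx, hxc⟩ := K.exists_relNDir_of_mem_support_atomAux ε (m - i) i m (by omega)
    (Finsupp.single_nonneg.2 zero_le_one) c hc
  rwa [Finset.mem_singleton.1 (Finsupp.support_single_subset hx)] at hxc

theorem relN_of_relI {i : ℕ} {a b : Σ n, K.B n} (hab : K.relI i a b) :
    Relation.ReflTransGen K.relN a b := by
  obtain ⟨ha, hb, c, hca, hcb⟩ := hab
  exact (K.relNDir_of_mem_support_atom true a.2 ha.le hca).trans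
    (Relation.reflTransGen_swap.1 (K.relNDir_of_mem_support_atom false b.2 hb.le hcb))

end ADCB

/-- **Steiner.** A strongly loop-free basis is loop-free. -/
theorem ADCB.stronglyLoopFree_loopFree (K : ADCB) (h : K.StronglyLoopFree) : K.LoopFree := by
  intro i a b hab hba
  have lift : Relation.ReflTransGen (K.relI i) ≤ Relation.ReflTransGen K.relN :=
    Relation.reflTransGen_closed fun _ _ => K.relN_of_relI
  exact h a b (lift a b hab) (lift b a hba)
end
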